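/- For any two objects M and X of 𝒟: X belongs to M∗[T[1]] if and only if Hom_𝒟(T, X′) belongs to Fac Hom_𝒟(T, M′) in mod Λ, where Fac N denotes the subcategory of factor modules of finite direct sums of copies of N. -/

import Mathlib

/- Common definitions for formalizing "Relative cluster tilting objects in
triangulated categories" (Yang–Zhu). -/

open CategoryTheory CategoryTheory.Limits CategoryTheory.Pretriangulated

universe w v u

attribute [local instance] CategoryTheory.Limits.hasBinaryBiproducts_of_finite_biproducts

namespace RelCT

section CatDefs

variable {C : Type u} [Category.{v} C]

/-- `Y` is a direct summand of `X`. -/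
def IsSummand (Y X : C) : Prop := ∃ (i : Y ⟶ X) (p : X ⟶ Y), i ≫ p = 𝟙 Y

variable [Preadditive C] [HasFiniteBiproducts C]

/-- `X` belongs to `add M`: it is a direct summand of a finite direct sum of copies of `M`. -/
def InAdd (M X : C) : Prop := ∃ n : ℕ, IsSummand X (⨁ (fun _ : Fin n => M))

/-- `X` is indecomposable. -/
def Indec (X : C) : Prop := ¬ IsZero X ∧ ∀ (Y Z : C), (X ≅ Y ⊞ Z) → IsZero Y ∨ IsZero Z

/-- The setoid of indecomposable direct summands of `X` up to isomorphism. -/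
def summandSetoid (X : C) : Setoid {Y : C // Indec Y ∧ IsSummand Y X} where
  r A B := Nonempty (A.1 ≅ B.1)
  iseqv := ⟨fun A => ⟨Iso.refl _⟩, fun h => h.elim fun e => ⟨e.symm⟩,
    fun h1 h2 => h1.elim fun e1 => h2.elim fun e2 => ⟨e1.trans e2⟩⟩

/-- `|X|`: the number of non-isomorphic indecomposable direct summands of `X`. -/
noncomputable def numIndec (X : C) : ℕ := Nat.card (Quotient (summandSetoid X))

/-- `X` is basic: it has no repeated indecomposable direct summands; equivalently (under
Krull–Schmidt), no direct summand of the form `Y ⊞ Y` with `Y ≠ 0`. -/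
def IsBasic (X : C) : Prop := ∀ Y : C, ¬ IsZero Y → ¬ IsSummand (Y ⊞ Y) X

/-- `f` factors through an object of `add M`. -/
def FactorsThruAdd (M : C) {X Y : C} (f : X ⟶ Y) : Prop :=
  ∃ (Z : C) (g : X ⟶ Z) (h : Z ⟶ Y), InAdd M Z ∧ f = g ≫ h

/-- Krull–Schmidt property: every object is a finite biproduct of objects with local
endomorphism rings. -/
def KrullSchmidt (C : Type u) [Category.{v} C] [Preadditive C] [HasFiniteBiproducts C] : Prop :=
  ∀ X : C, ∃ (n : ℕ) (f : Fin n → C) (_ : X ≅ ⨁ f), ∀ i, IsLocalRing (End (f i))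

section LinearDefs

variable (k : Type w) [Field k] [CategoryTheory.Linear k C]

/-- The ideal `[M](X, Y)`: the subgroup of `Hom(X, Y)` of morphisms factoring through `add M`
(realized as the `k`-span of the set of such morphisms, which coincides with that set). -/
def idealSubmodule (M X Y : C) : Submodule k (X ⟶ Y) :=
  Submodule.span k {f : X ⟶ Y | FactorsThruAdd M f}

lemma mem_ideal_of_factors {M X Y : C} {f : X ⟶ Y} (h : FactorsThruAdd M f) :
    f ∈ idealSubmodule k M X Y := Submodule.subset_span h

lemma ideal_precomp {M X X' Y : C} (f : X ⟶ X') {g : X' ⟶ Y}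
    (hg : g ∈ idealSubmodule k M X' Y) : f ≫ g ∈ idealSubmodule k M X Y := by
  induction hg using Submodule.span_induction with
  | mem a ha =>
      obtain ⟨Z, u, v, hZ, rfl⟩ := ha
      exact Submodule.subset_span ⟨Z, f ≫ u, v, hZ, by simp⟩
  | zero =>
      rw [comp_zero]
      exact Submodule.zero_mem _
  | add a b ha hb h1 h2 =>
      rw [Preadditive.comp_add]
      exact Submodule.add_mem _ h1 h2
  | smul c a ha h1 =>
      rw [CategoryTheory.Linear.comp_smul]
      exact Submodule.smul_mem _ c h1

lemma ideal_postcomp {M X Y Y' : C} {g : X ⟶ Y} (f : Y ⟶ Y')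
    (hg : g ∈ idealSubmodule k M X Y) : g ≫ f ∈ idealSubmodule k M X Y' := by
  induction hg using Submodule.span_induction with
  | mem a ha =>
      obtain ⟨Z, u, v, hZ, rfl⟩ := ha
      exact Submodule.subset_span ⟨Z, u, v ≫ f, hZ, by simp⟩
  | zero =>
      rw [zero_comp]
      exact Submodule.zero_mem _
  | add a b ha hb h1 h2 =>
      rw [Preadditive.add_comp]
      exact Submodule.add_mem _ h1 h2
  | smul c a ha h1 =>
      rw [CategoryTheory.Linear.smul_comp]
      exact Submodule.smul_mem _ c h1

/-- A Serre functor on a `k`-linear category: an autoequivalence `S` together with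
bifunctorial isomorphisms `Hom(X, Y) ≅ D Hom(Y, S X)`. -/
structure SerreData : Type (max (max u (v + 1)) w) where
  S : C ≌ C
  ε : ∀ (X Y : C), (X ⟶ Y) ≃ₗ[k] Module.Dual k (Y ⟶ S.functor.obj X)
  natX : ∀ {X X' Y : C} (f : X ⟶ X') (u : X' ⟶ Y) (v : Y ⟶ S.functor.obj X),
    ε X Y (f ≫ u) v = ε X' Y u (v ≫ S.functor.map f)
  natY : ∀ {X Y Y' : C} (u : X ⟶ Y) (g : Y ⟶ Y') (v : Y' ⟶ S.functor.obj X),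
    ε X Y' (u ≫ g) v = ε X Y u (g ≫ v)

end LinearDefs

section ShiftDefs

variable [HasShift C ℤ]

/-- `X` is `T[1]`-rigid: every morphism `X → X[1]` factoring through `add T[1]` vanishes. -/
def IsRelRigid (T X : C) : Prop :=
  ∀ f : X ⟶ X⟦(1:ℤ)⟧, FactorsThruAdd (T⟦(1:ℤ)⟧) f → f = 0

/-- `T` is a cluster-tilting object. -/
def IsClusterTilting (T : C) : Prop :=
  (∀ X : C, InAdd T X ↔ ∀ f : T ⟶ X⟦(1:ℤ)⟧, f = 0) ∧
  (∀ X : C, InAdd T X ↔ ∀ f : X ⟶ T⟦(1:ℤ)⟧, f = 0)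

/-- `X` is `T[1]`-cluster tilting. -/
def IsRelCT (T X : C) : Prop := IsRelRigid T X ∧ numIndec X = numIndec T

/-- `X` is almost `T[1]`-cluster tilting. -/
def IsAlmostRelCT (T X : C) : Prop := IsRelRigid T X ∧ numIndec X = numIndec T - 1

end ShiftDefs

end CatDefs

section Lam

variable {C : Type u} [Category.{v} C] [Preadditive C]

/-- The algebra `Λ = End(T)ᵒᵖ`. -/
abbrev Lam (T : C) : Type v := (End T)ᵐᵒᵖ

instance lamSMul (T X : C) : SMul (Lam T) (T ⟶ X) := ⟨fun r f => r.unop ≫ f⟩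

lemma lam_smul_def {T X : C} (r : Lam T) (f : T ⟶ X) : r • f = r.unop ≫ f := rfl

instance lamMulAction (T X : C) : MulAction (Lam T) (T ⟶ X) where
  one_smul f := Category.id_comp f
  mul_smul r s f := by
    show (r * s).unop ≫ f = r.unop ≫ (s.unop ≫ f)
    rw [MulOpposite.unop_mul, End.mul_def, Category.assoc]

instance lamDistribMulAction (T X : C) : DistribMulAction (Lam T) (T ⟶ X) where
  smul_zero r := comp_zero
  smul_add r f g := Preadditive.comp_add _ _ _ _ _ _

instance lamModule (T X : C) : Module (Lam T) (T ⟶ X) where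
  add_smul r s f := by
    show (r + s).unop ≫ f = r.unop ≫ f + s.unop ≫ f
    rw [MulOpposite.unop_add, Preadditive.add_comp]
  zero_smul f := zero_comp

/-- The `Λ`-module `Hom_𝒟(T, X)`. -/
noncomputable abbrev Hmod (T X : C) : ModuleCat.{v} (Lam T) := ModuleCat.of (Lam T) (T ⟶ X)

end Lam

section ModDefs

variable {R : Type v} [Ring R]

/-- A projective presentation `P1 → P0 → M → 0` (with finitely generated projectives). -/
structure ProjPres (M : ModuleCat.{v} R) where
  P1 : ModuleCat.{v} R
  P0 : ModuleCat.{v} R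
  fg1 : Module.Finite R P1
  fg0 : Module.Finite R P0
  proj1 : Projective P1
  proj0 : Projective P0
  p : P1 ⟶ P0
  q : P0 ⟶ M
  surj : Function.Surjective q
  exct : LinearMap.range p.hom = LinearMap.ker q.hom

/-- Minimality of a projective presentation: both `q : P0 → M` and the corestriction
`P1 → ker q` of `p` are projective covers. -/
def ProjPres.Minimal {M : ModuleCat.{v} R} (pr : ProjPres M) : Prop :=
  (∀ K : Submodule R pr.P0, K.map pr.q.hom = ⊤ → K = ⊤) ∧
  (∀ K : Submodule R pr.P1, K.map pr.p.hom = LinearMap.range pr.p.hom → K = ⊤)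

/-- `M` is `τ`-rigid, characterized via a minimal projective presentation `P1 →p P0 → M → 0`:
`Hom(M, τM) = 0` iff `Hom(p, M)` is surjective. -/
def IsTauRigid (M : ModuleCat.{v} R) : Prop :=
  ∃ pr : ProjPres M, pr.Minimal ∧ ∀ h : pr.P1 ⟶ M, ∃ g : pr.P0 ⟶ M, pr.p ≫ g = h

/-- `(M, P)` is a `τ`-rigid pair. -/
def IsTauRigidPair (M P : ModuleCat.{v} R) : Prop :=
  IsTauRigid M ∧ Projective P ∧ ∀ f : P ⟶ M, f = 0

/-- `(M, P)` is a support `τ`-tilting pair. -/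
noncomputable def IsSuppTauTiltingPair (M P : ModuleCat.{v} R) : Prop :=
  IsTauRigidPair M P ∧ numIndec M + numIndec P = numIndec (ModuleCat.of R R)

/-- `M` is a support `τ`-tilting module. -/
noncomputable def IsSuppTauTilting (M : ModuleCat.{v} R) : Prop :=
  ∃ P : ModuleCat.{v} R, Module.Finite R P ∧ IsBasic P ∧ IsSuppTauTiltingPair M P

/-- `M` is a `τ`-tilting module. -/
noncomputable def IsTauTilting (M : ModuleCat.{v} R) : Prop :=
  IsTauRigid M ∧ numIndec M = numIndec (ModuleCat.of R R)

/-- `W` lies in `Fac M`. -/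
def InFac (M W : ModuleCat.{v} R) : Prop :=
  ∃ (n : ℕ) (φ : (Fin n → M) →ₗ[R] W), Function.Surjective φ

end ModDefs

end RelCT

namespace RelCT

section MoreCatDefs

variable {C : Type u} [Category.{v} C] [Preadditive C] [HasFiniteBiproducts C] [HasShift C ℤ]

/-- `X` has no nonzero direct summand in `add T[1]`. -/
def NoT1Summand (T X : C) : Prop :=
  ∀ W : C, IsSummand W X → InAdd (T⟦(1:ℤ)⟧) W → IsZero W

/-- A decomposition `X ≅ X' ⊞ X''` where `X''` is a maximal direct summand of `X`
belonging to `add T[1]`. -/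
def MaxDecomp (T X X' X'' : C) : Prop :=
  Nonempty (X ≅ X' ⊞ X'') ∧ InAdd (T⟦(1:ℤ)⟧) X'' ∧ NoT1Summand T X'

/-- The factorization ideal `I_X ⊆ End(T[1])ᵒᵖ` vanishes: every endomorphism of `T[1]`
factoring through `X` is zero. -/
def FactIdealZero (T X : C) : Prop :=
  ∀ f : T⟦(1:ℤ)⟧ ⟶ T⟦(1:ℤ)⟧, (∃ (g : T⟦(1:ℤ)⟧ ⟶ X) (h : X ⟶ T⟦(1:ℤ)⟧), f = g ≫ h) → f = 0

/-- `X` is a maximal rigid object. -/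
def IsMaxRigid (X : C) : Prop :=
  (∀ f : X ⟶ X⟦(1:ℤ)⟧, f = 0) ∧
  ∀ Y : C, (InAdd X Y ↔ ∀ f : (X ⊞ Y) ⟶ (X ⊞ Y)⟦(1:ℤ)⟧, f = 0)

/-- `f : U1 → X` is a minimal right `add U`-approximation of `X`. -/
def IsMinRightApprox (U : C) {U1 X : C} (f : U1 ⟶ X) : Prop :=
  InAdd U U1 ∧ (∀ (U0 : C), InAdd U U0 → ∀ g : U0 ⟶ X, ∃ h : U0 ⟶ U1, h ≫ f = g) ∧
  (∀ e : U1 ⟶ U1, e ≫ f = f → IsIso e)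

/-- `g : X → U2` is a minimal left `add U`-approximation of `X`. -/
def IsMinLeftApprox (U : C) {X U2 : C} (g : X ⟶ U2) : Prop :=
  InAdd U U2 ∧ (∀ (U0 : C), InAdd U U0 → ∀ u : X ⟶ U0, ∃ h : U2 ⟶ U0, g ≫ h = u) ∧
  (∀ e : U2 ⟶ U2, g ≫ e = g → IsIso e)

end MoreCatDefs

section Tau

variable {k : Type w} [Field k] {C : Type u} [Category.{v} C] [Preadditive C]
  [CategoryTheory.Linear k C] [HasShift C ℤ]

/-- The Auslander–Reiten translation `τ_𝒟 = 𝕊 ∘ [-1]` associated to a Serre functor. -/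
abbrev tauD (SD : SerreData k (C := C)) (X : C) : C := (SD.S.functor.obj X)⟦(-1:ℤ)⟧

/-- The inverse Auslander–Reiten translation `τ_𝒟⁻¹ = 𝕊⁻¹ ∘ [1]`. -/
abbrev tauInvD (SD : SerreData k (C := C)) (Y : C) : C := SD.S.inverse.obj (Y⟦(1:ℤ)⟧)

end Tau

section Star

variable {C : Type u} [Category.{v} C] [HasZeroObject C] [Preadditive C] [HasShift C ℤ]
  [∀ n : ℤ, (CategoryTheory.shiftFunctor C n).Additive] [Pretriangulated C]
  [HasFiniteBiproducts C]

/-- `X` belongs to the subcategory `M ∗ [T[1]]`: there is a triangle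
`M_X → X → C_X → M_X[1]` with `M_X ∈ add M` and `X → C_X` factoring through `add T[1]`. -/
def MemStar (T M X : C) : Prop :=
  ∃ (A B : C) (a : A ⟶ X) (b : X ⟶ B) (c : B ⟶ A⟦(1:ℤ)⟧),
    InAdd M A ∧ FactorsThruAdd (T⟦(1:ℤ)⟧) b ∧ Triangle.mk a b c ∈ distTriang C

/-- `X` is a `T[1]`-projective object of the subcategory `M ∗ [T[1]]`. -/
def IsRelProjInStar (T M X : C) : Prop :=
  MemStar T M X ∧
  ∀ Y : C, MemStar T M Y → ∀ f : X ⟶ Y⟦(1:ℤ)⟧, FactorsThruAdd (T⟦(1:ℤ)⟧) f → f = 0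

/-- `N` is (up to isomorphism) `P_{T[1]}(M ∗ [T[1]])`: the direct sum of one copy of each of the
indecomposable `T[1]`-projective objects of `M ∗ [T[1]]`. -/
def IsPTGen (T M N : C) : Prop :=
  IsBasic N ∧ ∀ Y : C, Indec Y → (IsSummand Y N ↔ IsRelProjInStar T M Y)

end Star

section MoreModDefs

variable {R : Type v} [Ring R]

/-- `M` has projective dimension at most one. -/
def HasPdLeOne (M : ModuleCat.{v} R) : Prop := ∃ pr : ProjPres M, Function.Injective pr.p

/-- `Ext¹(M, M) = 0`: every self-extension of `M` splits. -/
def SelfExtFree (M : ModuleCat.{v} R) : Prop :=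
  ∀ (E : ModuleCat.{v} R) (i : M ⟶ E) (q : E ⟶ M), Function.Injective i →
    Function.Surjective q → LinearMap.range i.hom = LinearMap.ker q.hom → ∃ r : E ⟶ M, i ≫ r = 𝟙 M

/-- `M` is a tilting module: projective dimension at most one, no self-extensions,
and `|M| = |R|`. -/
noncomputable def IsTilting (M : ModuleCat.{v} R) : Prop :=
  HasPdLeOne M ∧ SelfExtFree M ∧ numIndec M = numIndec (ModuleCat.of R R)

end MoreModDefs

end RelCT

open CategoryTheory CategoryTheory.Limits CategoryTheory.Pretriangulated RelCT


/-
Because `Hom(T, T[1]) = 0`, the functor `Hom(T, -)` kills `add T[1]`; conversely, a morphism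
killed by `Hom(T, -)` factors through `add T[1]`, via the triangle `T₁ → T₀ → X → T₁[1]`
obtained from a right `add T`-approximation `T₀ → X` (which exists by Hom-finiteness). Hence,
by exactness of `Hom(T, -)` on the triangle `M_X → X → C_X → M_X[1]`, `X ∈ M ∗ [T[1]]` says
exactly that `Hom(T, Mⁿ) → Hom(T, X)` is onto for some `Mⁿ → X`. The same triangle shows that
`Hom(T, -)` is full, so this is `Hom(T, X) ∈ Fac Hom(T, M)`, and `Hom(T, M'') = Hom(T, X'') = 0`
lets us pass to `M'` and `X'`.
-/

namespace RelCT

section Additive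

variable {C : Type u} [Category.{v} C] [Preadditive C]

@[simps]
def homMap (T : C) {A X : C} (f : A ⟶ X) : (T ⟶ A) →ₗ[Lam T] (T ⟶ X) where
  toFun g := g ≫ f
  map_add' _ _ := Preadditive.add_comp _ _ _ _ _ _
  map_smul' _ _ := Category.assoc _ _ _

lemma _root_.LinearMap.map_comp_lam {T A X : C} (α : (T ⟶ A) →ₗ[Lam T] (T ⟶ X)) (c : T ⟶ T)
    (g : T ⟶ A) : α (c ≫ g) = c ≫ α g :=
  α.map_smul (MulOpposite.op c) g

variable [HasFiniteBiproducts C]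

noncomputable def biproductHomEquiv (T N : C) (n : ℕ) :
    (T ⟶ ⨁ fun _ : Fin n => N) ≃ₗ[Lam T] (Fin n → (T ⟶ N)) where
  toFun g j := g ≫ biproduct.π _ j
  invFun := biproduct.lift
  map_add' _ _ := funext fun _ => Preadditive.add_comp _ _ _ _ _ _
  map_smul' _ _ := funext fun _ => Category.assoc _ _ _
  left_inv g := biproduct.hom_ext _ _ fun j => by simp
  right_inv v := funext fun j => by simp

lemma inAdd_biproduct (T : C) (n : ℕ) : InAdd T (⨁ fun _ : Fin n => T) :=
  ⟨n, 𝟙 _, 𝟙 _, Category.id_comp _⟩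

lemma inAdd_self (T : C) : InAdd T T :=
  ⟨1, biproduct.ι (fun _ : Fin 1 => T) 0, biproduct.π _ 0, by simp⟩

lemma InAdd.map {D : Type*} [Category D] [Preadditive D] [HasFiniteBiproducts D]
    (F : C ⥤ D) [F.Additive] {M X : C} (h : InAdd M X) : InAdd (F.obj M) (F.obj X) := by
  obtain ⟨n, i, p, hip⟩ := h
  refine ⟨n, F.map i ≫ (F.mapBiproduct _).hom, (F.mapBiproduct _).inv ≫ F.map p, ?_⟩
  rw [Category.assoc, Iso.hom_inv_id_assoc, ← F.map_comp, hip, F.map_id]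

lemma InAdd.hom_eq_zero {U M Z : C} (hU : ∀ f : U ⟶ M, f = 0) (hZ : InAdd M Z) (g : U ⟶ Z) :
    g = 0 := by
  obtain ⟨n, i, p, hip⟩ := hZ
  have hgi : g ≫ i = 0 := biproduct.hom_ext _ _ fun j => by simpa using hU _
  rw [← Category.comp_id g, ← hip, reassoc_of% hgi, zero_comp]

lemma InAdd.eq_zero_of_comp {T W Y : C} (hW : InAdd T W) (u : W ⟶ Y)
    (hu : ∀ g : T ⟶ W, g ≫ u = 0) : u = 0 := by
  obtain ⟨n, i, p, hip⟩ := hW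
  have hpu : p ≫ u = 0 := biproduct.hom_ext' _ _ fun j => by
    simpa using hu (biproduct.ι (fun _ : Fin n => T) j ≫ p)
  rw [← Category.id_comp u, ← hip, Category.assoc, hpu, comp_zero]

lemma bijective_homMap_comp_fst (T : C) {X X' X'' : C} (e : X ≅ X' ⊞ X'')
    (hX'' : ∀ g : T ⟶ X'', g = 0) : Function.Bijective (homMap T (e.hom ≫ biprod.fst)) := by
  refine ⟨(injective_iff_map_eq_zero _).2 fun g hg => ?_, fun g' => ⟨g' ≫ biprod.inl ≫ e.inv, ?_⟩⟩
  · have : g ≫ e.hom = 0 := biprod.hom_ext _ _ (by simpa using hg) (by simpa using hX'' _)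
    simpa using this =≫ e.inv
  · simp

lemma exists_surjective_homMap (k : Type w) [Field k] [Linear k C] (T X : C)
    [Module.Finite k (T ⟶ X)] :
    ∃ (m : ℕ) (t : (⨁ fun _ : Fin m => T) ⟶ X), Function.Surjective (homMap T t) := by
  obtain ⟨m, s, hs⟩ := Module.Finite.exists_fin (R := k) (M := T ⟶ X)
  refine ⟨m, biproduct.desc s, fun g => ?_⟩
  obtain ⟨c, rfl⟩ :=
    (Submodule.mem_span_range_iff_exists_fun k).1 (hs ▸ Submodule.mem_top (x := g))
  exact ⟨∑ j, c j • biproduct.ι (fun _ : Fin m => T) j,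
    by simp only [homMap_apply, Preadditive.sum_comp, Linear.smul_comp, biproduct.ι_desc]⟩

/-- Yoneda for the free `Λ`-module `Hom(T, T^m)`. -/
lemma homMap_desc_eq {T X : C} {m : ℕ} (α : (T ⟶ ⨁ fun _ : Fin m => T) →ₗ[Lam T] (T ⟶ X)) :
    homMap T (biproduct.desc fun j => α (biproduct.ι (fun _ : Fin m => T) j)) = α := by
  ext h
  rw [homMap_apply, ← Category.comp_id h, ← biproduct.total, Preadditive.comp_sum,
    Preadditive.sum_comp, map_sum]
  refine Finset.sum_congr rfl fun j _ => ?_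
  rw [Category.assoc, Category.assoc, biproduct.ι_desc, ← Category.assoc, ← α.map_comp_lam,
    Category.assoc]

end Additive

section InFac

variable {R : Type v} [Ring R]

lemma InFac.of_linearEquiv {N N' W W' : ModuleCat.{v} R} (eN : N ≃ₗ[R] N') (eW : W ≃ₗ[R] W')
    (h : InFac N W) : InFac N' W' := by
  obtain ⟨n, φ, hφ⟩ := h
  refine ⟨n, eW.toLinearMap ∘ₗ φ ∘ₗ (LinearEquiv.piCongrRight fun _ => eN.symm).toLinearMap, ?_⟩
  exact eW.surjective.comp (hφ.comp (LinearEquiv.surjective _))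

lemma inFac_congr {N N' W W' : ModuleCat.{v} R} (eN : N ≃ₗ[R] N') (eW : W ≃ₗ[R] W') :
    InFac N W ↔ InFac N' W' :=
  ⟨.of_linearEquiv eN eW, .of_linearEquiv eN.symm eW.symm⟩

end InFac

section ClusterTilting

variable {C : Type u} [Category.{v} C] [Preadditive C] [HasFiniteBiproducts C] [HasShift C ℤ]
  {T : C}

namespace IsClusterTilting

lemma hom_eq_zero_of_inAdd_shift (hT : IsClusterTilting T) {Z : C} (hZ : InAdd (T⟦(1:ℤ)⟧) Z)
    (g : T ⟶ Z) : g = 0 :=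
  InAdd.hom_eq_zero ((hT.1 T).1 (inAdd_self T)) hZ g

lemma inAdd_shift_neg_one (hT : IsClusterTilting T) {Z : C} (hZ : ∀ g : T ⟶ Z, g = 0) :
    InAdd T (Z⟦(-1:ℤ)⟧) :=
  (hT.1 _).2 fun f => by
    let e := (shiftFunctorCompIsoId C (-1 : ℤ) 1 (by norm_num)).app Z
    exact (cancel_mono e.hom).1 (by rw [zero_comp]; exact hZ _)

variable [HasZeroObject C] [∀ n : ℤ, (shiftFunctor C n).Additive] [Pretriangulated C]
  (k : Type w) [Field k] [Linear k C]

lemma exists_resolution_triangle (hT : IsClusterTilting T) (X : C) [Module.Finite k (T ⟶ X)] :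
    ∃ (m : ℕ) (W : C) (v : W ⟶ ⨁ fun _ : Fin m => T) (t : (⨁ fun _ : Fin m => T) ⟶ X)
      (z : X ⟶ W⟦(1:ℤ)⟧), Triangle.mk v t z ∈ distTriang C ∧ InAdd T W ∧
      Function.Surjective (homMap T t) := by
  obtain ⟨m, t, ht⟩ := exists_surjective_homMap k T X
  obtain ⟨Z, z, w, hdist⟩ := distinguished_cocone_triangle t
  refine ⟨m, _, _, t, _, inv_rot_of_distTriang _ hdist, hT.inAdd_shift_neg_one fun g => ?_, ht⟩
  obtain ⟨g', rfl⟩ := Triangle.coyoneda_exact₃ _ hdist g ((hT.1 _).1 (inAdd_biproduct T m) _)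
  obtain ⟨h, rfl⟩ := ht g'
  have htz : t ≫ z = 0 := comp_distTriang_mor_zero₁₂ _ hdist
  show (h ≫ t) ≫ z = 0
  rw [Category.assoc, htz, comp_zero]

lemma factorsThruAdd_shift_of_comp_eq_zero (hT : IsClusterTilting T) {X B : C}
    [Module.Finite k (T ⟶ X)] (u : X ⟶ B) (hu : ∀ g : T ⟶ X, g ≫ u = 0) :
    FactorsThruAdd (T⟦(1:ℤ)⟧) u := by
  obtain ⟨m, W, v, t, z, hdist, hW, -⟩ := hT.exists_resolution_triangle k X
  have htu : t ≫ u = 0 :=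
    biproduct.hom_ext' _ _ fun j => by rw [comp_zero, ← Category.assoc]; exact hu _
  obtain ⟨g, hg⟩ := Triangle.yoneda_exact₃ _ hdist u htu
  exact ⟨_, z, g, hW.map _, hg⟩

lemma exists_homMap_eq (hT : IsClusterTilting T) {A X : C} [Module.Finite k (T ⟶ A)]
    (α : (T ⟶ A) →ₗ[Lam T] (T ⟶ X)) : ∃ f : A ⟶ X, homMap T f = α := by
  obtain ⟨m, W, v, t, z, hdist, hW, ht⟩ := hT.exists_resolution_triangle k A
  obtain ⟨g₀, hg₀⟩ : ∃ g₀ : (⨁ fun _ : Fin m => T) ⟶ X, homMap T g₀ = α ∘ₗ homMap T t :=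
    ⟨_, homMap_desc_eq _⟩
  have hvt : v ≫ t = 0 := comp_distTriang_mor_zero₁₂ _ hdist
  -- `g₀` vanishes on `W` because `W ∈ add T` and `Hom(T, g₀) = α ∘ Hom(T, t)` kills `Hom(T, v)`
  have hvg₀ : v ≫ g₀ = 0 := hW.eq_zero_of_comp _ fun g => by
    simpa [hvt] using LinearMap.congr_fun hg₀ (g ≫ v)
  obtain ⟨f, hf⟩ : ∃ f : A ⟶ X, g₀ = t ≫ f := Triangle.yoneda_exact₂ _ hdist _ hvg₀
  refine ⟨f, LinearMap.ext fun g => ?_⟩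
  obtain ⟨h, rfl⟩ := ht g
  simpa [hf] using LinearMap.congr_fun hg₀ h

lemma memStar_iff_exists_surjective_homMap (hT : IsClusterTilting T) {M X : C}
    [Module.Finite k (T ⟶ X)] :
    MemStar T M X ↔
      ∃ (n : ℕ) (f : (⨁ fun _ : Fin n => M) ⟶ X), Function.Surjective (homMap T f) := by
  constructor
  · rintro ⟨A, B, a, b, c, ⟨n, i, p, hip⟩, ⟨Z, u, u', hZ, rfl⟩, hdist⟩
    refine ⟨n, p ≫ a, fun g => ?_⟩
    obtain ⟨h, rfl⟩ : ∃ h : T ⟶ A, g = h ≫ a := Triangle.coyoneda_exact₂ _ hdist g <| by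
      show g ≫ u ≫ u' = 0
      rw [← Category.assoc, hT.hom_eq_zero_of_inAdd_shift hZ (g ≫ u), zero_comp]
    exact ⟨h ≫ i, by simp [reassoc_of% hip]⟩
  · rintro ⟨n, f, hf⟩
    obtain ⟨B, b, c, hdist⟩ := distinguished_cocone_triangle f
    refine ⟨_, B, f, b, c, inAdd_biproduct M n,
      hT.factorsThruAdd_shift_of_comp_eq_zero k b fun g => ?_, hdist⟩
    obtain ⟨h, rfl⟩ := hf g
    have hfb : f ≫ b = 0 := comp_distTriang_mor_zero₁₂ _ hdist
    simp [hfb]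

lemma inFac_hmod_iff_exists_surjective_homMap (hT : IsClusterTilting T) {M X : C}
    [∀ Y : C, Module.Finite k (T ⟶ Y)] :
    InFac (Hmod T M) (Hmod T X) ↔
      ∃ (n : ℕ) (f : (⨁ fun _ : Fin n => M) ⟶ X), Function.Surjective (homMap T f) := by
  constructor
  · rintro ⟨n, φ, hφ⟩
    obtain ⟨f, hf⟩ := hT.exists_homMap_eq k (φ ∘ₗ (biproductHomEquiv T M n).toLinearMap)
    exact ⟨n, f, hf ▸ hφ.comp (LinearEquiv.surjective _)⟩
  · rintro ⟨n, f, hf⟩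
    exact ⟨n, homMap T f ∘ₗ (biproductHomEquiv T M n).symm.toLinearMap,
      hf.comp (LinearEquiv.surjective _)⟩

lemma memStar_iff_inFac (hT : IsClusterTilting T) {M X : C}
    [∀ Y : C, Module.Finite k (T ⟶ Y)] :
    MemStar T M X ↔ InFac (Hmod T M) (Hmod T X) :=
  (hT.memStar_iff_exists_surjective_homMap k).trans
    (hT.inFac_hmod_iff_exists_surjective_homMap k).symm

end IsClusterTilting

end ClusterTilting

end RelCT

theorem statement12
    (k : Type w) [Field k]
    {C : Type u} [Category.{v} C] [Preadditive C] [CategoryTheory.Linear k C]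
    [HasZeroObject C] [HasShift C ℤ] [∀ n : ℤ, (CategoryTheory.shiftFunctor C n).Additive]
    [Pretriangulated C] [HasFiniteBiproducts C]
    [∀ X Y : C, Module.Finite k (X ⟶ Y)]
    (hKS : KrullSchmidt C)
    (SD : SerreData k (C := C))
    (T : C) (hT : IsClusterTilting T) :
    ∀ (M X M' M'' X' X'' : C), MaxDecomp T M M' M'' → MaxDecomp T X X' X'' →
      (MemStar T M X ↔ InFac (Hmod T M') (Hmod T X')) := by
  rintro M X M' M'' X' X'' ⟨⟨eM⟩, hM'', -⟩ ⟨⟨eX⟩, hX'', -⟩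
  rw [hT.memStar_iff_inFac k]
  exact inFac_congr
    (.ofBijective _ (bijective_homMap_comp_fst T eM (hT.hom_eq_zero_of_inAdd_shift hM'')))
    (.ofBijective _ (bijective_homMap_comp_fst T eX (hT.hom_eq_zero_of_inAdd_shift hX'')))
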